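/- Let n ≥ 1 and let p_1,…,p_n, r_1,…,r_n be natural numbers with r_i ≥ 1 for all i, with r_1 = min{r_1,…,r_n}, and with m := p_1 + ⋯ + p_n ≥ 1. Suppose q_1 = ⋯ = q_n = 0. Then the group G_E(p,q,r) is isomorphic to the group with presentation ⟨b, t | b^{2^{r_1}} = 1, t^{−1} b^{2^m} t = b⟩. -/
import Mathlib


/-- The relators of the echinus group `G_E(p,q,r) = ⟨b_1,…,b_n, t | b_j^{2^{r_j}} = 1
(1 ≤ j ≤ n), b_i^{2^{p_i}} = b_{i+1}^{2^{q_i}} (1 ≤ i ≤ n−1),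
t⁻¹ b_n^{2^{p_n}} t = b_1^{2^{q_n}}⟩`, where `some i` is `b_{i+1}` and `none` is `t`. -/
def echinusRels (n : ℕ) (hn : 0 < n) (p q r : Fin n → ℕ) :
    Set (FreeGroup (Option (Fin n))) :=
  {x | ∃ j : Fin n, x = FreeGroup.of (some j) ^ 2 ^ r j} ∪
  {x | ∃ i j : Fin n, (i : ℕ) + 1 = (j : ℕ) ∧
      x = FreeGroup.of (some i) ^ 2 ^ p i * (FreeGroup.of (some j) ^ 2 ^ q i)⁻¹} ∪
  {(FreeGroup.of none)⁻¹ *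
      FreeGroup.of (some ⟨n - 1, Nat.sub_lt hn Nat.one_pos⟩) ^
        2 ^ p ⟨n - 1, Nat.sub_lt hn Nat.one_pos⟩ *
      FreeGroup.of none *
      (FreeGroup.of (some ⟨0, hn⟩) ^ 2 ^ q ⟨n - 1, Nat.sub_lt hn Nat.one_pos⟩)⁻¹}

/-- The relators of the group `⟨b, t | b^{2^r} = 1, t⁻¹ b^{2^m} t = b⟩`,
where `true` is `b` and `false` is `t`. -/
def twoGenRels (r m : ℕ) : Set (FreeGroup Bool) :=
  {FreeGroup.of true ^ 2 ^ r,
    (FreeGroup.of false)⁻¹ * FreeGroup.of true ^ 2 ^ m * FreeGroup.of false *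
      (FreeGroup.of true)⁻¹}

theorem stmt13 (n : ℕ) (hn : 0 < n) (p q r : Fin n → ℕ) (hr : ∀ i, 1 ≤ r i)
    (hq : ∀ i, q i = 0) (hmin : ∀ i, r ⟨0, hn⟩ ≤ r i) (hm : 1 ≤ ∑ i, p i) :
    Nonempty (PresentedGroup (echinusRels n hn p q r) ≃*
      PresentedGroup (twoGenRels (r ⟨0, hn⟩) (∑ i, p i))) := by
  classical
  set ρ := r ⟨0, hn⟩ with hρ
  set m := ∑ i, p i with hmdef
  set p' : ℕ → ℕ := fun k => if h : k < n then p ⟨k, h⟩ else 0 with hp'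
  set P : ℕ → ℕ := fun k => ∑ j ∈ Finset.range k, p' j with hPdef
  have hp'eq : ∀ (k : ℕ) (h : k < n), p' k = p ⟨k, h⟩ := fun k h => dif_pos h
  have hPn : P n = m := by
    have h0 : P n = ∑ j ∈ Finset.range n, p' j := rfl
    rw [h0, ← Fin.sum_univ_eq_sum_range p' n, hmdef]
    exact Finset.sum_congr rfl fun i _ => by rw [hp'eq i i.isLt]
  have hn1 : n - 1 + 1 = n := Nat.succ_pred_eq_of_pos hn
  have key : ∀ {β : Type} (rels : Set (FreeGroup β)) (x : FreeGroup β), x ∈ rels →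
      PresentedGroup.mk rels x = 1 := fun rels x hx =>
    (QuotientGroup.eq_one_iff x).2 (Subgroup.subset_normalClosure hx)
  -- echinus relations
  have erel1 : ∀ j : Fin n,
      (PresentedGroup.of (some j) : PresentedGroup (echinusRels n hn p q r)) ^ 2 ^ r j = 1 := by
    intro j
    have := key (echinusRels n hn p q r) _ (Set.mem_union_left _ (Set.mem_union_left _ ⟨j, rfl⟩))
    rwa [map_pow] at this
  have erel2 : ∀ i j : Fin n, (i : ℕ) + 1 = (j : ℕ) →
      (PresentedGroup.of (some j) : PresentedGroup (echinusRels n hn p q r)) =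
        PresentedGroup.of (some i) ^ 2 ^ p i := by
    intro i j hij
    have := key (echinusRels n hn p q r) _ (Set.mem_union_left _ (Set.mem_union_right _ ⟨i, j, hij, rfl⟩))
    rw [map_mul, map_inv, map_pow, map_pow, hq i, pow_zero, pow_one,
      mul_inv_eq_one] at this
    exact this.symm
  have erel3 :
      (PresentedGroup.of none : PresentedGroup (echinusRels n hn p q r))⁻¹ *
          PresentedGroup.of (some ⟨n - 1, Nat.sub_lt hn Nat.one_pos⟩) ^
            2 ^ p ⟨n - 1, Nat.sub_lt hn Nat.one_pos⟩ *
          PresentedGroup.of none = PresentedGroup.of (some ⟨0, hn⟩) := by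
    have := key (echinusRels n hn p q r) _ (Set.mem_union_right _ rfl)
    rw [map_mul, map_mul, map_mul, map_inv, map_inv, map_pow, map_pow,
      hq, pow_zero, pow_one, mul_inv_eq_one] at this
    exact this
  -- two-generator relations
  have trel1 :
      (PresentedGroup.of true : PresentedGroup (twoGenRels ρ m)) ^ 2 ^ ρ = 1 := by
    have := key (twoGenRels ρ m) _ (Set.mem_insert _ _)
    rwa [map_pow] at this
  have trel2 :
      (PresentedGroup.of false : PresentedGroup (twoGenRels ρ m))⁻¹ *
          PresentedGroup.of true ^ 2 ^ m * PresentedGroup.of false =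
        PresentedGroup.of true := by
    have := key (twoGenRels ρ m) _ (Set.mem_insert_of_mem _ rfl)
    rw [map_mul, map_mul, map_mul, map_inv, map_inv, map_pow,
      mul_inv_eq_one] at this
    exact this
  have hBk : ∀ k, ρ ≤ k →
      (PresentedGroup.of true : PresentedGroup (twoGenRels ρ m)) ^ 2 ^ k = 1 := by
    intro k hk
    have h2 : 2 ^ k = 2 ^ ρ * 2 ^ (k - ρ) := by rw [← pow_add, Nat.add_sub_cancel' hk]
    rw [h2, pow_mul, trel1, one_pow]
  -- key lemma in the echinus group
  have hkey : ∀ (k : ℕ) (h : k < n),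
      (PresentedGroup.of (some ⟨0, hn⟩) : PresentedGroup (echinusRels n hn p q r)) ^ 2 ^ P k =
        PresentedGroup.of (some ⟨k, h⟩) := by
    intro k
    induction k with
    | zero =>
      intro h
      have h0 : P 0 = 0 := rfl
      rw [h0, pow_zero, pow_one]
    | succ k ih =>
      intro h
      have hk : k < n := Nat.lt_of_succ_lt h
      have hPk : P (k + 1) = P k + p' k := Finset.sum_range_succ _ _
      rw [hPk, pow_add, pow_mul, ih hk, hp'eq k hk, ← erel2 ⟨k, hk⟩ ⟨k + 1, h⟩ rfl]
  have hPsucc : P n = P (n - 1) + p' (n - 1) := by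
    conv_lhs => rw [← hn1]
    exact Finset.sum_range_succ p' (n - 1)
  have hPm : 2 ^ P (n - 1) * 2 ^ p ⟨n - 1, Nat.sub_lt hn Nat.one_pos⟩ = 2 ^ m := by
    rw [← pow_add, ← hp'eq (n - 1) (Nat.sub_lt hn Nat.one_pos), ← hPsucc, hPn]
  -- the forward map
  set f : Option (Fin n) → PresentedGroup (twoGenRels ρ m) := fun x =>
    x.elim (PresentedGroup.of false) fun i => PresentedGroup.of true ^ 2 ^ P i.val with hf
  have hfrel : ∀ x ∈ echinusRels n hn p q r, FreeGroup.lift f x = 1 := by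
    rintro x ((⟨j, rfl⟩ | ⟨i, j, hij, rfl⟩) | rfl)
    · rw [map_pow, FreeGroup.lift_apply_of]
      show ((PresentedGroup.of true : PresentedGroup (twoGenRels ρ m)) ^ 2 ^ P j.val) ^ 2 ^ r j = 1
      rw [← pow_mul, ← pow_add]
      exact hBk _ (le_trans (hmin j) (Nat.le_add_left _ _))
    · rw [map_mul, map_inv, map_pow, map_pow, FreeGroup.lift_apply_of, FreeGroup.lift_apply_of,
        hq i, pow_zero, pow_one, mul_inv_eq_one]
      show ((PresentedGroup.of true : PresentedGroup (twoGenRels ρ m)) ^ 2 ^ P i.val) ^ 2 ^ p i =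
        PresentedGroup.of true ^ 2 ^ P j.val
      have hPj : P j.val = P i.val + p' i.val := by
        rw [← hij]; exact Finset.sum_range_succ p' i.val
      rw [hPj, hp'eq i.val i.isLt, Fin.eta, pow_add, pow_mul]
    · rw [map_mul, map_mul, map_mul, map_inv, map_inv, map_pow, map_pow,
        FreeGroup.lift_apply_of, FreeGroup.lift_apply_of, hq, pow_zero, pow_one, mul_inv_eq_one]
      show (PresentedGroup.of false : PresentedGroup (twoGenRels ρ m))⁻¹ *
          (PresentedGroup.of true ^ 2 ^ P (n - 1)) ^ 2 ^ p ⟨n - 1, Nat.sub_lt hn Nat.one_pos⟩ *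
          PresentedGroup.of false = PresentedGroup.of true ^ 2 ^ P 0
      have hP0 : P 0 = 0 := rfl
      rw [← pow_mul, hPm, hP0, pow_zero, pow_one]
      exact trel2
  -- the backward map
  set g : Bool → PresentedGroup (echinusRels n hn p q r) := fun b =>
    bif b then PresentedGroup.of (some ⟨0, hn⟩) else PresentedGroup.of none with hg
  have hgrel : ∀ x ∈ twoGenRels ρ m, FreeGroup.lift g x = 1 := by
    rintro x (rfl | rfl)
    · rw [map_pow, FreeGroup.lift_apply_of]
      exact erel1 ⟨0, hn⟩
    · rw [map_mul, map_mul, map_mul, map_inv, map_inv, map_pow, FreeGroup.lift_apply_of,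
        FreeGroup.lift_apply_of, mul_inv_eq_one]
      show (PresentedGroup.of none : PresentedGroup (echinusRels n hn p q r))⁻¹ *
          PresentedGroup.of (some ⟨0, hn⟩) ^ 2 ^ m * PresentedGroup.of none =
        PresentedGroup.of (some ⟨0, hn⟩)
      rw [← hPm, pow_mul, hkey (n - 1) (Nat.sub_lt hn Nat.one_pos)]
      exact erel3
  set φ := PresentedGroup.toGroup hfrel with hφ
  set ψ := PresentedGroup.toGroup hgrel with hψ
  have h1 : ψ.comp φ = MonoidHom.id _ := by
    ext x
    cases x with
    | none => simp [hφ, hψ, hf, hg]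
    | some i =>
      rw [MonoidHom.comp_apply, MonoidHom.id_apply, hφ, PresentedGroup.toGroup.of]
      show ψ (PresentedGroup.of true ^ 2 ^ P i.val) = _
      rw [map_pow, hψ, PresentedGroup.toGroup.of]
      show (PresentedGroup.of (some ⟨0, hn⟩) : PresentedGroup (echinusRels n hn p q r)) ^
        2 ^ P i.val = _
      rw [hkey i.val i.isLt, Fin.eta]
  have h2 : φ.comp ψ = MonoidHom.id _ := by
    ext x
    cases x with
    | false => simp [hφ, hψ, hf, hg]
    | true =>
      rw [MonoidHom.comp_apply, MonoidHom.id_apply, hψ, PresentedGroup.toGroup.of]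
      show φ (PresentedGroup.of (some ⟨0, hn⟩)) = _
      rw [hφ, PresentedGroup.toGroup.of]
      show (PresentedGroup.of true : PresentedGroup (twoGenRels ρ m)) ^ 2 ^ P 0 = _
      have hP0 : P 0 = 0 := rfl
      rw [hP0, pow_zero, pow_one]
  exact ⟨MonoidHom.toMulEquiv φ ψ h1 h2⟩
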